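/- arXiv:2008.03166 — 2 statements merged into one kernel-verified Lean document; each statement's English description precedes it below -/
import Mathlib

section
/- Let μ be a partition of n, i ≥ 2 with i < s = length(μ), satisfying μ(i) < μ(i−1) + ⌊(μ(i−1)−1)/(i−1)⌋ where μ(j) = μ_1+...+μ_j−j+1. Write μ(i−1) − 1 = e(i−1) + f with 0 ≤ f ≤ i−2. Then the sequence μ̃ = (e+2 repeated f times, e+1 repeated (i−1−f) times, μ_i + 1, μ_{i+1}, ..., μ_{s−1}, μ_s − 1) (with a final part μ_s − 1 dropped if μ_s = 1) is a weakly decreasing sequence of nonnegative integers with total sum n. -/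
/-!
Let `A = μ_1 + ⋯ + μ_{i-1}`. Since all parts are positive, `A ≥ i - 1`, so the division hypothesis
reads `A = (i - 1)(e + 1) + f`: the first `i - 1` parts of `μ̃` are the most balanced composition of
`A` into `i - 1` parts. The hypothesis `μ(i) < μ(i-1) + e` says `μ_i ≤ e`, so these parts are
`≥ e + 1 ≥ μ_i + 1`, while the tail `μ_{i+1}, …, μ_{s-1}, μ_s - 1` stays below `μ_i`. The sum is
unchanged because one unit moves from `μ_s` to `μ_i`.
-/

open List

theorem List.getLast!_drop {α : Type*} [Inhabited α] {l : List α} {i : ℕ} (h : i < l.length) :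
    (l.drop i).getLast! = l.getLast! := by
  simp [getLast?_drop, h.not_ge]

theorem List.pairwise_ge_append_of_le {α : Type*} [Preorder α] {l₁ l₂ : List α} {b : α}
    (h₁ : l₁.Pairwise (· ≥ ·)) (h₂ : l₂.Pairwise (· ≥ ·)) (hb₁ : ∀ x ∈ l₁, b ≤ x)
    (hb₂ : ∀ y ∈ l₂, y ≤ b) : (l₁ ++ l₂).Pairwise (· ≥ ·) :=
  pairwise_append.2 ⟨h₁, h₂, fun x hx y hy => (hb₂ y hy).trans (hb₁ x hx)⟩

def decLast (l : List ℕ) : List ℕ := l.dropLast ++ [l.getLast! - 1]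

theorem pairwise_ge_decLast {l : List ℕ} (hl : l.Pairwise (· ≥ ·)) :
    (decLast l).Pairwise (· ≥ ·) := by
  rcases eq_nil_or_concat' l with rfl | ⟨L, b, rfl⟩
  · simp [decLast]
  · rw [pairwise_append] at hl
    simp only [decLast, dropLast_concat, getLast!_eq_getLast?_getD, getLast?_concat,
      Option.getD_some, pairwise_append, pairwise_singleton, mem_singleton, forall_eq, true_and]
    exact ⟨hl.1, fun x hx => (Nat.sub_le b 1).trans (hl.2.2 x hx b (mem_singleton_self b))⟩

theorem le_of_mem_decLast {l : List ℕ} {b : ℕ} (h : ∀ x ∈ l, x ≤ b) :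
    ∀ x ∈ decLast l, x ≤ b := by
  rcases eq_nil_or_concat' l with rfl | ⟨L, c, rfl⟩
  · simp [decLast]
  · simp only [decLast, dropLast_concat, getLast!_eq_getLast?_getD, getLast?_concat,
      Option.getD_some, mem_append, mem_singleton]
    rintro x (hx | rfl)
    · exact h x (mem_append_left _ hx)
    · exact (Nat.sub_le c 1).trans (h c mem_concat_self)

theorem sum_decLast_add_one {l : List ℕ} (hl : l ≠ []) (hpos : 0 < l.getLast hl) :
    (decLast l).sum + 1 = l.sum := by
  obtain ⟨L, b, rfl⟩ := (eq_nil_or_concat' l).resolve_left hl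
  simp only [getLast_concat] at hpos
  simp only [decLast, dropLast_concat, getLast!_eq_getLast?_getD, getLast?_concat,
    Option.getD_some, sum_append, sum_singleton]
  omega

theorem pairwise_ge_replicate_succ_append_replicate (f g a : ℕ) :
    (replicate f (a + 1) ++ replicate g a).Pairwise (· ≥ ·) := by
  simp only [pairwise_append, pairwise_replicate, mem_replicate]
  exact ⟨Or.inr le_rfl, Or.inr le_rfl, by omega⟩

theorem le_of_mem_replicate_succ_append_replicate {f g a x : ℕ}
    (hx : x ∈ replicate f (a + 1) ++ replicate g a) : a ≤ x := by
  simp only [mem_append, mem_replicate] at hx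
  omega

theorem sum_replicate_succ_append_replicate {f k : ℕ} (a : ℕ) (h : f ≤ k) :
    (replicate f (a + 1) ++ replicate (k - f) a).sum = k * a + f := by
  obtain ⟨g, rfl⟩ := Nat.exists_eq_add_of_le h
  simp only [sum_append, sum_replicate, smul_eq_mul, Nat.add_sub_cancel_left]
  ring

theorem pairwise_ge_replicate_append_decLast {f g a m : ℕ} {d : List ℕ} (hm : m ≤ a)
    (hd : d.Pairwise (· ≥ ·)) (hdm : ∀ y ∈ d, y ≤ m) :
    (replicate f (a + 1 + 1) ++ replicate g (a + 1) ++ [m + 1] ++ decLast d).Pairwise (· ≥ ·) := by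
  have hhead : ∀ x ∈ replicate f (a + 1 + 1) ++ replicate g (a + 1) ++ [m + 1], m + 1 ≤ x := by
    intro x hx
    rcases mem_append.1 hx with hx | hx
    · exact (Nat.succ_le_succ hm).trans (le_of_mem_replicate_succ_append_replicate hx)
    · exact (mem_singleton.1 hx).ge
  refine pairwise_ge_append_of_le (pairwise_ge_append_of_le
    (pairwise_ge_replicate_succ_append_replicate ..) (pairwise_singleton _ _) (b := m + 1)
    (fun x hx => hhead x (mem_append_left _ hx)) (by simp)) (pairwise_ge_decLast hd) hhead ?_
  exact le_of_mem_decLast fun y hy => (hdm y hy).trans m.le_succ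

theorem sum_replicate_append_decLast {f k a m : ℕ} {d : List ℕ} (hf : f ≤ k) (hd : d ≠ [])
    (hpos : 0 < d.getLast hd) :
    (replicate f (a + 1) ++ replicate (k - f) a ++ [m + 1] ++ decLast d).sum =
      (k * a + f) + (m + d.sum) := by
  rw [sum_append, sum_append, sum_replicate_succ_append_replicate a hf, sum_singleton,
    ← sum_decLast_add_one hd hpos]
  ring

/-- Under the hypotheses of the main theorem's minimality argument
(`μ(i) < μ(i-1) + e` where `μ(i-1) - 1 = e(i-1) + f`, `0 ≤ f ≤ i-2`, `i < s`),
the modified sequence `μ̃ = (e+2 (f times), e+1 (i-1-f times), μ_i + 1,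
μ_{i+1}, …, μ_{s-1}, μ_s - 1)` is a weakly decreasing sequence of nonnegative
integers with total sum `n`. -/
theorem mu_tilde_is_partition (n i e f : ℕ) (μ : List ℕ)
    (hsorted : μ.Pairwise (· ≥ ·)) (hpos : ∀ x ∈ μ, 0 < x) (hsum : μ.sum = n)
    (hi : 2 ≤ i) (hlen : i < μ.length)
    (hf : f ≤ i - 2)
    (hdiv : ((μ.take (i - 1)).sum + 1 - (i - 1)) - 1 = e * (i - 1) + f)
    (hcond : (μ.take i).sum + 1 - i < ((μ.take (i - 1)).sum + 1 - (i - 1)) + e) :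
    (let μt : List ℕ :=
      List.replicate f (e + 2) ++ List.replicate (i - 1 - f) (e + 1) ++
        [μ[i - 1]! + 1] ++ (μ.drop i).dropLast ++ [μ.getLast! - 1]
     μt.Pairwise (· ≥ ·) ∧ μt.sum = n) := by
  obtain ⟨k, rfl⟩ : ∃ k, i = k + 1 := ⟨i - 1, by omega⟩
  simp only [Nat.add_sub_cancel] at hdiv hcond ⊢
  have hk : k < μ.length := by omega
  set d := μ.drop (k + 1)
  have hA : k ≤ (μ.take k).sum := by
    simpa [hk.le] using length_le_sum_of_one_le (μ.take k) fun x hx => hpos x (mem_of_mem_take hx)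
  rw [sum_take_succ μ k hk] at hcond
  have hm : μ[k] ≤ e := by omega
  have hA_eq : (μ.take k).sum = k * (e + 1) + f := by rw [Nat.mul_succ, Nat.mul_comm]; omega
  have hdrop : μ.drop k = μ[k] :: d := drop_eq_getElem_cons hk
  have hd : (∀ y ∈ d, y ≤ μ[k]) ∧ d.Pairwise (· ≥ ·) := by
    simpa [hdrop] using hsorted.sublist (drop_sublist k μ)
  have hd_ne : d ≠ [] := by simpa [d] using hlen
  have hμ : μ.sum = (μ.take k).sum + (μ[k] + d.sum) := by
    rw [← sum_cons, ← hdrop, ← sum_append, take_append_drop]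
  rw [← getLast!_drop hlen, getElem!_pos μ k hk, append_assoc _ d.dropLast, ← decLast.eq_1,
    sum_replicate_append_decLast (by omega) hd_ne
    (hpos _ (mem_of_mem_drop (getLast_mem hd_ne))), ← hA_eq, ← hμ]
  exact ⟨pairwise_ge_replicate_append_decLast hm hd.2 hd.1, hsum⟩
end

section
/- Let μ be a partition of n, i ≥ 2, with hypotheses as above (μ_i ≤ e where μ(i−1) − 1 = e(i−1) + f, 0 ≤ f ≤ i−2), and let μ̃ be the modified partition (f parts e+2, then i−1−f parts e+1, then μ_i+1, μ_{i+1}, ..., μ_{s−1}, μ_s−1). Then μ(j) ≥ μ̃(j) for all 1 ≤ j ≤ i−1, and μ(i) < μ̃(i), where ν(j) = ν_1 + ... + ν_j − j + 1. -/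
/-!
On the first `i - 1` parts, `μ̃` is the balanced sequence with the same total as `μ`
(its `f` parts `e + 2` and `i - 1 - f` parts `e + 1` sum to `(μ.take (i - 1)).sum`), and the
prefix sums of a weakly decreasing integer sequence dominate those of the balanced sequence
with the same total. At position `i`, `μ̃` carries `μ_i + 1` instead of `μ_i`, so
`μ̃(i) = μ(i) + 1`.
-/

namespace List

theorem mul_length_add_min_le_sum_left {l₁ l₂ : List ℕ} {q f : ℕ}
    (hle : ∀ a ∈ l₁, ∀ b ∈ l₂, b ≤ a)
    (hsum : (l₁ ++ l₂).sum = q * (l₁.length + l₂.length) + f) :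
    q * l₁.length + min l₁.length f ≤ l₁.sum := by
  by_cases hbig : ∀ a ∈ l₁, q + 1 ≤ a
  · have h := l₁.card_nsmul_le_sum (q + 1) hbig
    rw [smul_eq_mul] at h
    have := min_le_left l₁.length f
    nlinarith
  · -- some part of `l₁` is at most `q`, hence so is every part of `l₂`
    push Not at hbig
    obtain ⟨a, ha, haq⟩ := hbig
    have h := l₂.sum_le_card_nsmul q fun b hb => (hle a ha b hb).trans (Nat.le_of_lt_succ haq)
    rw [smul_eq_mul] at h
    rw [sum_append] at hsum
    have := min_le_right l₁.length f
    nlinarith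

theorem mul_add_min_le_sum_take {l : List ℕ} (hsorted : l.Pairwise (· ≥ ·)) {q f j m : ℕ}
    (hjm : j ≤ m) (hm : m ≤ l.length) (hsum : (l.take m).sum = q * m + f) :
    q * j + min j f ≤ (l.take j).sum := by
  have hsplit := (take_append_drop j (l.take m)).symm
  have hsorted' : (l.take m).Pairwise (· ≥ ·) := hsorted.sublist (take_sublist m l)
  rw [hsplit, pairwise_append] at hsorted'
  have key := mul_length_add_min_le_sum_left hsorted'.2.2 (q := q) (f := f) (by
    rw [← hsplit, ← length_append, ← hsplit, length_take, Nat.min_eq_left hm, hsum])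
  simpa [take_take, Nat.min_eq_left hjm, hjm.trans hm] using key

theorem sum_take_replicate_succ_append_replicate (a f k j : ℕ) (hj : j ≤ f + k) :
    ((replicate f (a + 1) ++ replicate k a).take j).sum = a * j + min j f := by
  rw [take_append, take_replicate, take_replicate, length_replicate, sum_append,
    sum_replicate, sum_replicate, smul_eq_mul, smul_eq_mul]
  rcases le_total j f with h | h
  · rw [Nat.min_eq_left h, Nat.sub_eq_zero_of_le h, Nat.zero_min]
    ring
  · rw [Nat.min_eq_right h, Nat.min_eq_left (by omega : j - f ≤ k)]
    obtain ⟨d, rfl⟩ := Nat.exists_eq_add_of_le h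
    rw [Nat.add_sub_cancel_left]
    ring

theorem le_sum_take_of_pos {l : List ℕ} (hpos : ∀ x ∈ l, 0 < x) {j : ℕ}
    (hj : j ≤ l.length) :
    j ≤ (l.take j).sum := by
  have := length_le_sum_of_one_le _ fun x hx => hpos x (mem_of_mem_take (l := l) (i := j) hx)
  rwa [length_take_of_le hj] at this

theorem sum_take_eq_sum_take_sub_one_add_getElem! {M : Type*} [AddMonoid M] [Inhabited M]
    {l : List M} {i : ℕ} (hi : 0 < i) (hil : i ≤ l.length) :
    (l.take i).sum = (l.take (i - 1)).sum + l[i - 1]! := by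
  rw [getElem!_pos l (i - 1) (by omega), ← sum_take_succ, Nat.sub_add_cancel hi]

end List

open List

theorem mu_tilde_comparison_general (i e f : ℕ) (μ : List ℕ)
    (hsorted : μ.Pairwise (· ≥ ·)) (hpos : ∀ x ∈ μ, 0 < x)
    (hi : 2 ≤ i) (hlen : i < μ.length)
    (hf : f ≤ i - 2)
    (hdiv : ((μ.take (i - 1)).sum + 1 - (i - 1)) - 1 = e * (i - 1) + f) :
    (let μt : List ℕ :=
      List.replicate f (e + 2) ++ List.replicate (i - 1 - f) (e + 1) ++
        [μ[i - 1]! + 1] ++ (μ.drop i).dropLast ++ [μ.getLast! - 1]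
     (∀ j : ℕ, 1 ≤ j → j ≤ i - 1 →
        (μt.take j).sum + 1 - j ≤ (μ.take j).sum + 1 - j) ∧
       (μ.take i).sum + 1 - i < (μt.take i).sum + 1 - i) := by
  intro μt
  set m := i - 1
  set balanced := replicate f (e + 1 + 1) ++ replicate (m - f) (e + 1)
  have hbalanced_len : balanced.length = m := by
    simp only [balanced, length_append, length_replicate]; omega
  have hbalanced_prefix (j : ℕ) (hj : j ≤ m) : (balanced.take j).sum = (e + 1) * j + min j f :=
    sum_take_replicate_succ_append_replicate _ _ _ _ (by omega)
  have hsplit :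
      μt = balanced ++ ((μ[i - 1]! + 1) :: ((μ.drop i).dropLast ++ [μ.getLast! - 1])) := by
    simp only [μt, balanced, append_assoc]; rfl
  -- positivity of the parts keeps the truncated subtractions in `hdiv` and in the goal honest
  have hm_le_sum : m ≤ (μ.take m).sum := le_sum_take_of_pos hpos (by omega)
  have hsum : (μ.take m).sum = (e + 1) * m + f := by rw [add_one_mul]; omega
  refine ⟨fun j _ hj => ?_, ?_⟩
  · have := mul_add_min_le_sum_take hsorted hj (by omega) hsum
    rw [hsplit, take_append_of_le_length (by omega), hbalanced_prefix j hj]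
    omega
  · have hbalanced_sum := hbalanced_prefix m le_rfl
    rw [take_of_length_le hbalanced_len.le, Nat.min_eq_right (by omega : f ≤ m)] at hbalanced_sum
    rw [sum_take_eq_sum_take_sub_one_add_getElem! (by omega) hlen.le, hsplit, take_append,
      take_of_length_le (l := balanced) (by omega), hbalanced_len, show i - m = 1 by omega,
      take_succ_cons, take_zero, sum_append, hbalanced_sum, hsum, sum_singleton]
    omega

/-- With `μ̃` the modified partition (`f` parts `e+2`, then `i-1-f` parts
`e+1`, then `μ_i + 1, μ_{i+1}, …, μ_{s-1}, μ_s - 1`), one has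
`μ(j) ≥ μ̃(j)` for all `1 ≤ j ≤ i-1`, and `μ(i) < μ̃(i)`, where
`ν(j) = ν_1 + ⋯ + ν_j - j + 1`. -/
theorem mu_tilde_comparison (n i e f : ℕ) (μ : List ℕ)
    (hsorted : μ.Pairwise (· ≥ ·)) (hpos : ∀ x ∈ μ, 0 < x) (hsum : μ.sum = n)
    (hi : 2 ≤ i) (hlen : i < μ.length)
    (hf : f ≤ i - 2)
    (hdiv : ((μ.take (i - 1)).sum + 1 - (i - 1)) - 1 = e * (i - 1) + f)
    (hμi : μ[i - 1]! ≤ e) :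
    (let μt : List ℕ :=
      List.replicate f (e + 2) ++ List.replicate (i - 1 - f) (e + 1) ++
        [μ[i - 1]! + 1] ++ (μ.drop i).dropLast ++ [μ.getLast! - 1]
     (∀ j : ℕ, 1 ≤ j → j ≤ i - 1 →
        (μt.take j).sum + 1 - j ≤ (μ.take j).sum + 1 - j) ∧
       (μ.take i).sum + 1 - i < (μt.take i).sum + 1 - i) :=
  mu_tilde_comparison_general i e f μ hsorted hpos hi hlen hf hdiv
end
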